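/- arXiv:2307.00619 — 2 statements merged into one kernel-verified Lean document; each statement's English description precedes it below -/
import Mathlib

section
/- Let S ∈ ℝ^{d×l} have orthonormal columns and A ∈ ℝ^{l×d} satisfy (AS)ᵀ(AS) ≻ 0 with spectral decomposition (AS)ᵀ(AS) = U Σ Uᵀ where Σ = diag(σ₁,…,σ_l), σ_j > 0. Let x₀ = S z₀ be a ground-truth image, y = A x₀ the measurements, and let θ* = √(1−β) S Sᵀ be the optimal pixel-space denoiser. Define the matrix step size ζ = (1/2)(SU) diag(1/σ₁,…,1/σ_l)(SU)ᵀ. Then for any x₁ ∈ ℝ^d, the DPS update x̂₀ = (1/√(1−β)) θ* x₁ − ζ ∇_{x₁} ‖A S Sᵀ x₁ − y‖² satisfies x̂₀ = x₀, i.e., the ground-truth sample is exactly recovered. -/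
open Matrix

/-- DPS exact recovery in pixel space with the matrix step size
`ζ = (1/2)(SU) diag(1/σ) (SU)ᵀ`. -/
theorem dps_pixel_exact_recovery {d l : ℕ}
    (S : Matrix (Fin d) (Fin l) ℝ) (hS : Sᵀ * S = 1)
    (A : Matrix (Fin l) (Fin d) ℝ)
    (U : Matrix (Fin l) (Fin l) ℝ) (hU : U * Uᵀ = 1) (hU' : Uᵀ * U = 1)
    (σ : Fin l → ℝ) (hσ : ∀ j, 0 < σ j)
    (hM : (A * S)ᵀ * (A * S) = U * Matrix.diagonal σ * Uᵀ)
    (hMpos : ((A * S)ᵀ * (A * S)).PosDef)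
    (β : ℝ) (hβ : β ∈ Set.Ioo (0 : ℝ) 1)
    (z₀ : Fin l → ℝ) (x₀ : Fin d → ℝ) (hx₀ : x₀ = S.mulVec z₀)
    (y : Fin l → ℝ) (hy : y = A.mulVec x₀)
    (ζ : Matrix (Fin d) (Fin d) ℝ)
    (hζ : ζ = (1 / 2 : ℝ) • ((S * U) * Matrix.diagonal (fun j => (σ j)⁻¹) * (S * U)ᵀ))
    (x₁ : Fin d → ℝ) :
    (1 / Real.sqrt (1 - β)) • (Real.sqrt (1 - β) • (S * Sᵀ)).mulVec x₁
      - ζ.mulVec ((2 : ℝ) • (S * Sᵀ * Aᵀ).mulVec ((A * S * Sᵀ).mulVec x₁ - y)) = x₀ := by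
  have hs : (0:ℝ) < Real.sqrt (1 - β) := Real.sqrt_pos.2 (by linarith [hβ.2])
  -- helper cancellation lemmas
  have hcS : ∀ {m : Type} [Fintype m] (X : Matrix (Fin l) m ℝ), Sᵀ * (S * X) = X := by
    intro m _ X; rw [← Matrix.mul_assoc, hS, Matrix.one_mul]
  have hcU : ∀ (X : Matrix (Fin l) (Fin l) ℝ), Uᵀ * (U * X) = X := by
    intro X; rw [← Matrix.mul_assoc, hU', Matrix.one_mul]
  have hDD : ∀ (X : Matrix (Fin l) (Fin l) ℝ),
      Matrix.diagonal (fun j => (σ j)⁻¹) * (Matrix.diagonal σ * X) = X := by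
    intro X
    rw [← Matrix.mul_assoc, Matrix.diagonal_mul_diagonal]
    have : (fun j => (σ j)⁻¹ * σ j) = fun _ => (1:ℝ) := by
      funext j; exact inv_mul_cancel₀ (hσ j).ne'
    rw [this, Matrix.diagonal_one, Matrix.one_mul]
  have hM2 : Sᵀ * (Aᵀ * (A * S)) = U * (Matrix.diagonal σ * Uᵀ) := by
    have := hM
    simp only [Matrix.transpose_mul, Matrix.mul_assoc] at this
    simpa [Matrix.mul_assoc] using this
  have key : S * U * Matrix.diagonal (fun j => (σ j)⁻¹) * (S * U)ᵀ * (S * Sᵀ * Aᵀ) * (A * S)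
      = S := by
    simp only [Matrix.transpose_mul, Matrix.mul_assoc]
    rw [hcS, hM2, hcU, hDD, hU, Matrix.mul_one]
  have key2 : S * U * Matrix.diagonal (fun j => (σ j)⁻¹) * (S * U)ᵀ * (S * Sᵀ * Aᵀ) *
      (A * S * Sᵀ) = S * Sᵀ := by
    calc S * U * Matrix.diagonal (fun j => (σ j)⁻¹) * (S * U)ᵀ * (S * Sᵀ * Aᵀ) * (A * S * Sᵀ)
        = (S * U * Matrix.diagonal (fun j => (σ j)⁻¹) * (S * U)ᵀ * (S * Sᵀ * Aᵀ) * (A * S)) * Sᵀ := by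
          simp only [Matrix.mul_assoc]
      _ = S * Sᵀ := by rw [key]
  -- simplify scalar factors
  rw [Matrix.smul_mulVec, smul_smul, one_div_mul_cancel hs.ne', one_smul,
    hζ, hy, hx₀, Matrix.smul_mulVec, Matrix.mulVec_smul, smul_smul]
  norm_num
  simp only [Matrix.transpose_mul] at key key2
  rw [Matrix.mulVec_sub, Matrix.mulVec_mulVec, Matrix.mulVec_mulVec, key, key2]
  abel
end

section
/- Let S ∈ ℝ^{d×l} have orthonormal columns, and let A ∈ ℝ^{l×d} be such that AᵀA is a diagonal 0/1 projection (mask) matrix and M := Sᵀ Aᵀ A S = (AS)ᵀ(AS) is positive definite. Fix x₀ = S z₀ and define the gluing objective G(z) = ‖z − Sᵀ(AᵀA x₀ + (I_d − AᵀA) S z)‖²₂. Then G(z) = ‖M(z − z₀)‖²₂, and consequently z₀ is the unique global minimizer of G with G(z₀) = 0. -/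
open Matrix

/-! Since `SᵀS = 1` and `x₀ = S z₀`, re-encoding the glued image gives
`Sᵀ(P S z₀ + (1 - P) S z) = z - SᵀPS (z - z₀)` for any matrix `P`, so the residual of the gluing
objective is `M (z - z₀)`. Positive definiteness of `M` makes this residual vanish only at `z₀`. -/

section Gluing

variable {R : Type*} [CommRing R] {m n : Type*} [Fintype m] [Fintype n] [DecidableEq m]
  [DecidableEq n]

theorem sub_mulVec_glue_eq_mulVec_sub {S : Matrix m n R} (hS : Sᵀ * S = 1) (P : Matrix m m R)
    (z z₀ : n → R) :
    z - Sᵀ *ᵥ (P *ᵥ (S *ᵥ z₀) + (1 - P) *ᵥ (S *ᵥ z)) = (Sᵀ * P * S) *ᵥ (z - z₀) := by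
  have hSz : Sᵀ *ᵥ (S *ᵥ z) = z := by rw [mulVec_mulVec, hS, one_mulVec]
  rw [mulVec_add, sub_mulVec, one_mulVec, mulVec_sub, mulVec_sub, hSz]
  simp only [mulVec_mulVec, Matrix.mul_assoc]
  abel

end Gluing

theorem Matrix.PosDef.mulVec_ne_zero {n : Type*} [Fintype n] {M : Matrix n n ℝ} (hM : M.PosDef)
    {v : n → ℝ} (hv : v ≠ 0) : M *ᵥ v ≠ 0 := by
  intro h
  simpa [h] using hM.dotProduct_mulVec_pos hv

theorem sum_sq_pos_of_ne_zero {n : Type*} [Fintype n] {w : n → ℝ} (hw : w ≠ 0) :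
    0 < ∑ i, w i ^ 2 := by
  obtain ⟨i, hi⟩ := Function.ne_iff.mp hw
  exact Finset.sum_pos' (fun j _ => sq_nonneg (w j)) ⟨i, Finset.mem_univ i, sq_pos_of_ne_zero hi⟩

theorem gluing_objective_unique_minimizer_general {d l : ℕ}
    (S : Matrix (Fin d) (Fin l) ℝ) (hS : Sᵀ * S = 1)
    (A : Matrix (Fin l) (Fin d) ℝ)
    (hMpos : (Sᵀ * Aᵀ * A * S).PosDef)
    (z₀ : Fin l → ℝ) (x₀ : Fin d → ℝ) (hx₀ : x₀ = S.mulVec z₀)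
    (G : (Fin l → ℝ) → ℝ)
    (hG : ∀ z, G z = ∑ i, (z i -
      Sᵀ.mulVec ((Aᵀ * A).mulVec x₀ + ((1 : Matrix (Fin d) (Fin d) ℝ) - Aᵀ * A).mulVec
        (S.mulVec z)) i) ^ 2) :
    (∀ z, G z = ∑ i, ((Sᵀ * Aᵀ * A * S).mulVec (z - z₀) i) ^ 2) ∧
    G z₀ = 0 ∧ (∀ z, z ≠ z₀ → G z₀ < G z) := by
  have hG' : ∀ z, G z = ∑ i, ((Sᵀ * Aᵀ * A * S).mulVec (z - z₀) i) ^ 2 := by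
    intro z
    have hres := sub_mulVec_glue_eq_mulVec_sub hS (Aᵀ * A) z z₀
    rw [← Matrix.mul_assoc, ← hx₀] at hres
    simp only [hG z, ← hres, Pi.sub_apply]
  have hG₀ : G z₀ = 0 := by simp [hG']
  refine ⟨hG', hG₀, fun z hz => ?_⟩
  rw [hG₀, hG']
  exact sum_sq_pos_of_ne_zero (hMpos.mulVec_ne_zero (sub_ne_zero.mpr hz))

/-- The gluing objective equals `‖M(z − z₀)‖²` with `M = SᵀAᵀAS`, hence `z₀` is its
unique global minimizer with value `0`. -/
theorem gluing_objective_unique_minimizer {d l : ℕ}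
    (S : Matrix (Fin d) (Fin l) ℝ) (hS : Sᵀ * S = 1)
    (A : Matrix (Fin l) (Fin d) ℝ)
    (m : Fin d → ℝ) (hm : ∀ i, m i = 0 ∨ m i = 1) (hmask : Aᵀ * A = Matrix.diagonal m)
    (hMpos : (Sᵀ * Aᵀ * A * S).PosDef)
    (z₀ : Fin l → ℝ) (x₀ : Fin d → ℝ) (hx₀ : x₀ = S.mulVec z₀)
    (G : (Fin l → ℝ) → ℝ)
    (hG : ∀ z, G z = ∑ i, (z i -
      Sᵀ.mulVec ((Aᵀ * A).mulVec x₀ + ((1 : Matrix (Fin d) (Fin d) ℝ) - Aᵀ * A).mulVec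
        (S.mulVec z)) i) ^ 2) :
    (∀ z, G z = ∑ i, ((Sᵀ * Aᵀ * A * S).mulVec (z - z₀) i) ^ 2) ∧
    G z₀ = 0 ∧ (∀ z, z ≠ z₀ → G z₀ < G z) :=
  gluing_objective_unique_minimizer_general S hS A hMpos z₀ x₀ hx₀ G hG
end
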